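/- Let (X, Y) be a compatible couple with X reflexive. A sequence (xₙ) in X ∩_j Y converges weakly in X ∩_j Y to x ∈ X ∩_j Y if and only if sup_{n} ‖xₙ‖_X < ∞ and jxₙ ⇀ jx weakly in Y. -/

import Mathlib

/-
Weak convergence in `X ∩_j Y ⊆ X × Y` reduces, by extending functionals with Hahn–Banach, to weak
convergence of both components, so the point is to get `xₙ ⇀ x` in `X`. Since `X` is reflexive,
Banach–Alaoglu in the bidual makes bounded sequences of `X` weakly relatively compact, and it
suffices that every weak cluster point `w` of `(xₙ)` equals `x`. The intersection is a closed
subspace of `X × Y`, hence weakly closed, so `(w, jx)` lies in it: `e_X w = e_Y (jx) = e_X x`, and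
`e_X` is injective.
-/

open Filter

/-- The pull-back intersection of a compatible couple `(X, Y, Z, e_X, e_Y)`, realized as the
submodule `{(x,y) | e_X x = e_Y y}` of `X × Y`; the intersection embedding
`j = e_Y⁻¹ e_X` is the second component. -/
def pbInter {X Y Z : Type*} [NormedAddCommGroup X] [NormedSpace ℝ X]
    [NormedAddCommGroup Y] [NormedSpace ℝ Y]
    [AddCommGroup Z] [Module ℝ Z] [TopologicalSpace Z]
    (eX : X →L[ℝ] Z) (eY : Y →L[ℝ] Z) : Submodule ℝ (X × Y) where
  carrier := {q | eX q.1 = eY q.2}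
  add_mem' := by
    intro a b ha hb
    simp only [Set.mem_setOf_eq, Prod.fst_add, Prod.snd_add, map_add] at *
    rw [ha, hb]
  zero_mem' := by simp
  smul_mem' := by
    intro c a ha
    simp only [Set.mem_setOf_eq, Prod.smul_fst, Prod.smul_snd, map_smul] at *
    rw [ha]

/-- Weak convergence of a sequence in a normed space, in terms of the continuous dual. -/
def WeakConv {E : Type*} [NormedAddCommGroup E] [NormedSpace ℝ E]
    (u : ℕ → E) (x : E) : Prop :=
  ∀ f : StrongDual ℝ E, Tendsto (fun n => f (u n)) atTop (nhds (f x))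

/-- A normed space is reflexive if the canonical inclusion into its double dual is onto. -/
def IsReflexiveSpace (E : Type*) [NormedAddCommGroup E] [NormedSpace ℝ E] : Prop :=
  Function.Surjective (NormedSpace.inclusionInDoubleDual ℝ E)

open Topology NormedSpace

section WeakConvergence

variable {E F : Type*} [NormedAddCommGroup E] [NormedSpace ℝ E]
  [NormedAddCommGroup F] [NormedSpace ℝ F]

theorem WeakConv.map {u : ℕ → E} {x : E} (h : WeakConv u x) (T : E →L[ℝ] F) :
    WeakConv (fun n => T (u n)) (T x) :=
  fun g => h (g.comp T)

theorem WeakConv.prodMk {a : ℕ → E} {b : ℕ → F} {a₀ : E} {b₀ : F} (ha : WeakConv a a₀)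
    (hb : WeakConv b b₀) : WeakConv (fun n => (a n, b n)) (a₀, b₀) := fun Φ => by
  have hΦ (v : E × F) : Φ v = Φ.comp (.inl ℝ E F) v.1 + Φ.comp (.inr ℝ E F) v.2 :=
    (Φ.comp_inl_add_comp_inr v).symm
  simpa only [hΦ] using (ha (Φ.comp (.inl ℝ E F))).add (hb (Φ.comp (.inr ℝ E F)))

theorem weakConv_subtype_iff (p : Submodule ℝ E) {u : ℕ → p} {x : p} :
    WeakConv (fun n => (u n : E)) x ↔ WeakConv u x := by
  refine ⟨fun h f => ?_, fun h => h.map p.subtypeL⟩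
  obtain ⟨g, hg, -⟩ := exists_extension_norm_eq p f
  simpa only [hg] using h g

theorem WeakConv.exists_norm_le {u : ℕ → E} {x : E} (h : WeakConv u x) :
    ∃ M, ∀ n, ‖u n‖ ≤ M := by
  obtain ⟨M, hM⟩ := banach_steinhaus (g := fun n => inclusionInDoubleDual ℝ E (u n)) fun f => by
    obtain ⟨C, hC⟩ := (h f).norm.bddAbove_range
    exact ⟨C, fun n => hC (Set.mem_range_self n)⟩
  exact ⟨M, fun n => (inclusionInDoubleDualLi ℝ).norm_map (u n) ▸ hM n⟩

theorem IsReflexiveSpace.weakConv_of_unique_clusterPt (hE : IsReflexiveSpace E) {a : ℕ → E}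
    {a₀ : E} {M : ℝ} (hM : ∀ n, ‖a n‖ ≤ M)
    (huniq : ∀ w : E, (∀ g : StrongDual ℝ E, MapClusterPt (g w) atTop fun n => g (a n)) →
      w = a₀) :
    WeakConv a a₀ := by
  let J : E → WeakDual ℝ (StrongDual ℝ E) := fun x =>
    StrongDual.toWeakDual (inclusionInDoubleDual ℝ E x)
  have hlim : Tendsto (fun n => J (a n)) atTop (𝓝 (J a₀)) := by
    refine (WeakDual.isCompact_closedBall 0 M).tendsto_nhds_of_unique_mapClusterPt
      (Eventually.of_forall fun n => ?_) fun φ _ hφ => ?_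
    · simpa [J] using (inclusionInDoubleDualLi ℝ).norm_map (a n) ▸ hM n
    · obtain ⟨w, hw⟩ := hE (WeakDual.toStrongDual φ)
      obtain rfl : J w = φ := hw
      exact congrArg J <| huniq w fun g =>
        hφ.continuousAt_comp (f := fun ψ : WeakDual ℝ (StrongDual ℝ E) => ψ g)
          (WeakDual.eval_continuous g).continuousAt
  exact tendsto_iff_forall_eval_tendsto_topDualPairing.mp hlim

theorem Submodule.exists_dual_annihilating_of_notMem {V : Type*} [AddCommGroup V] [Module ℝ V]
    [TopologicalSpace V] [IsTopologicalAddGroup V] [ContinuousSMul ℝ V] [LocallyConvexSpace ℝ V]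
    (p : Submodule ℝ V) (hp : IsClosed (p : Set V)) {z : V} (hz : z ∉ p) :
    ∃ f : StrongDual ℝ V, (∀ y ∈ p, f y = 0) ∧ f z ≠ 0 := by
  obtain ⟨f, c, hfp, hc⟩ := geometric_hahn_banach_closed_point p.convex hp hz
  have hc₀ : 0 < c := by simpa using hfp 0 p.zero_mem
  refine ⟨f, fun y hy => ?_, by linarith⟩
  -- a linear functional bounded above on a subspace vanishes on it
  by_contra hfy
  have := hfp (((c + 1) / f y) • y) (p.smul_mem _ hy)
  rw [map_smul, smul_eq_mul, div_mul_cancel₀ _ hfy] at this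
  linarith

theorem Submodule.mk_mem_of_mapClusterPt_of_weakConv (p : Submodule ℝ (E × F))
    (hp : IsClosed (p : Set (E × F))) {a : ℕ → E} {b : ℕ → F} (hab : ∀ n, (a n, b n) ∈ p)
    {w : E} {b₀ : F} (hw : ∀ g : StrongDual ℝ E, MapClusterPt (g w) atTop fun n => g (a n))
    (hb : WeakConv b b₀) : (w, b₀) ∈ p := by
  by_contra hwb
  obtain ⟨Φ, hΦp, hΦ⟩ := p.exists_dual_annihilating_of_notMem hp hwb
  have hlim : Tendsto (fun n => Φ.comp (.inl ℝ E F) (a n)) atTop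
      (𝓝 (-Φ.comp (.inr ℝ E F) b₀)) := by
    refine (hb (Φ.comp (.inr ℝ E F))).neg.congr fun n => ?_
    rw [neg_eq_iff_add_eq_zero, add_comm, Φ.comp_inl_add_comp_inr (a n, b n)]
    exact hΦp _ (hab n)
  apply hΦ
  rw [← Φ.comp_inl_add_comp_inr, eq_of_nhds_neBot ((hw _).clusterPt.mono hlim), neg_add_cancel]

end WeakConvergence

theorem isClosed_pbInter {X Y Z : Type*} [NormedAddCommGroup X] [NormedSpace ℝ X]
    [NormedAddCommGroup Y] [NormedSpace ℝ Y] [AddCommGroup Z] [Module ℝ Z] [TopologicalSpace Z]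
    [T2Space Z] (eX : X →L[ℝ] Z) (eY : Y →L[ℝ] Z) :
    IsClosed (pbInter eX eY : Set (X × Y)) :=
  isClosed_eq (eX.continuous.comp continuous_fst) (eY.continuous.comp continuous_snd)

theorem weakConv_fst_of_weakConv_snd {X Y Z : Type*} [NormedAddCommGroup X] [NormedSpace ℝ X]
    [NormedAddCommGroup Y] [NormedSpace ℝ Y] [AddCommGroup Z] [Module ℝ Z] [TopologicalSpace Z]
    [T2Space Z] {eX : X →L[ℝ] Z} {eY : Y →L[ℝ] Z} (heX : Function.Injective eX)
    (hX : IsReflexiveSpace X) {u : ℕ → pbInter eX eY} {x : pbInter eX eY} {M : ℝ}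
    (hM : ∀ n, ‖(u n : X × Y).1‖ ≤ M) (hsnd : WeakConv (fun n => (u n : X × Y).2) (x : X × Y).2) :
    WeakConv (fun n => (u n : X × Y).1) (x : X × Y).1 :=
  hX.weakConv_of_unique_clusterPt hM fun _ hw => heX <|
    ((pbInter eX eY).mk_mem_of_mapClusterPt_of_weakConv (isClosed_pbInter eX eY)
      (fun n => (u n).2) hw hsnd).trans x.2.symm

theorem stmt_10_general {X Y Z : Type*} [NormedAddCommGroup X] [NormedSpace ℝ X]
    [NormedAddCommGroup Y] [NormedSpace ℝ Y]
    [AddCommGroup Z] [Module ℝ Z] [TopologicalSpace Z] [T2Space Z]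
    (eX : X →L[ℝ] Z) (eY : Y →L[ℝ] Z)
    (heX : Function.Injective eX)
    (hXrefl : IsReflexiveSpace X)
    (u : ℕ → ↥(pbInter eX eY)) (x : ↥(pbInter eX eY)) :
    WeakConv u x ↔
      ((∃ M : ℝ, ∀ n, ‖((u n : X × Y)).1‖ ≤ M) ∧
       WeakConv (fun n => ((u n : X × Y)).2) ((x : X × Y)).2) := by
  rw [← weakConv_subtype_iff]
  constructor
  · intro h
    obtain ⟨M, hM⟩ := h.exists_norm_le
    exact ⟨⟨M, fun n => (norm_fst_le _).trans (hM n)⟩, h.map (.snd ℝ X Y)⟩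
  · rintro ⟨⟨M, hM⟩, hsnd⟩
    exact (weakConv_fst_of_weakConv_snd heX hXrefl hM hsnd).prodMk hsnd

/-- if `X` is reflexive, a sequence in `X ∩_j Y` converges weakly to `x` iff
it is bounded in `X` and `j xₙ ⇀ j x` weakly in `Y`. -/
theorem stmt_10 {X Y Z : Type*} [NormedAddCommGroup X] [NormedSpace ℝ X] [CompleteSpace X]
    [NormedAddCommGroup Y] [NormedSpace ℝ Y] [CompleteSpace Y]
    [AddCommGroup Z] [Module ℝ Z] [TopologicalSpace Z] [T2Space Z]
    [IsTopologicalAddGroup Z] [ContinuousSMul ℝ Z]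
    (eX : X →L[ℝ] Z) (eY : Y →L[ℝ] Z)
    (heX : Function.Injective eX) (heY : Function.Injective eY)
    (hXrefl : IsReflexiveSpace X)
    (u : ℕ → ↥(pbInter eX eY)) (x : ↥(pbInter eX eY)) :
    WeakConv u x ↔
      ((∃ M : ℝ, ∀ n, ‖((u n : X × Y)).1‖ ≤ M) ∧
       WeakConv (fun n => ((u n : X × Y)).2) ((x : X × Y)).2) :=
  stmt_10_general eX eY heX hXrefl u x
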